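/- arXiv:2205.10460 — 4 statements merged into one kernel-verified Lean document; each statement's English description precedes it below -/
import Mathlib

section
/- Let ν ≥ 1 be an integer and ε > 0 a real number. Then there exists a constant C > 0 such that for all x, y ∈ ℤ^ν, Σ_{z ∈ ℤ^ν} (1 + ‖x − z‖₁)^{−(ν+ε)} · (1 + ‖z − y‖₁)^{−(ν+ε)} ≤ C · (1 + ‖x − y‖₁)^{−(ν+ε)}, where the sum on the left is the (convergent) tsum over ℤ^ν. -/
/-!
Write `F r = (1 + r)^(-s)` with `s = ν + ε`. Of the two distances `‖x - z‖₁`, `‖z - y‖₁` the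
larger is at least `‖x - y‖₁ / 2`, so its factor is at most `2^s F(‖x - y‖₁)`, while the other
factor is bounded by the sum of both. Summing over `z`, each of the two remaining sums is a
translate of `∑_z F(‖z‖₁)`, which is finite because `s > ν`: by
`∏ (1 + |z_i|) ≤ (1 + ‖z‖₁)^ν` it is dominated by a product of one-dimensional `p`-series
with `p = s / ν > 1`.
-/

open Finset Real

theorem summable_pi_prod_of_nonneg {ι : Type*} [Fintype ι] {κ : ι → Type*}
    {f : ∀ i, κ i → ℝ} (hf₀ : ∀ i a, 0 ≤ f i a) (hf : ∀ i, Summable (f i)) :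
    Summable fun x : ∀ i, κ i => ∏ i, f i (x i) := by
  classical
  refine summable_of_sum_le (c := ∏ i, ∑' a, f i a)
    (fun x => prod_nonneg fun i _ => hf₀ i (x i)) fun u => ?_
  calc ∑ x ∈ u, ∏ i, f i (x i)
      ≤ ∑ x ∈ Fintype.piFinset fun i => u.image (· i), ∏ i, f i (x i) :=
        sum_le_sum_of_subset_of_nonneg
          (fun x hx => Fintype.mem_piFinset.2 fun i => mem_image_of_mem _ hx)
          (fun x _ _ => prod_nonneg fun i _ => hf₀ i (x i))
    _ = ∏ i, ∑ a ∈ u.image (· i), f i a := (prod_univ_sum _ _).symm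
    _ ≤ ∏ i, ∑' a, f i a :=
        prod_le_prod (fun i _ => sum_nonneg fun a _ => hf₀ i a)
          fun i _ => (hf i).sum_le_tsum _ fun a _ => hf₀ i a

theorem summable_one_add_abs_int_rpow_neg {p : ℝ} (hp : 1 < p) :
    Summable fun n : ℤ => (1 + |(n : ℝ)|) ^ (-p) := by
  have hnat : Summable fun n : ℕ => ((n + 1 : ℕ) : ℝ) ^ (-p) :=
    (summable_nat_add_iff 1).mpr (summable_nat_rpow.mpr (by linarith))
  refine .of_nat_of_neg (hnat.congr fun n => ?_) (hnat.congr fun n => ?_) <;>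
    simp [add_comm]

theorem prod_one_add_le_one_add_sum_pow {ι : Type*} (s : Finset ι) {a : ι → ℝ}
    (ha : ∀ i ∈ s, 0 ≤ a i) : ∏ i ∈ s, (1 + a i) ≤ (1 + ∑ i ∈ s, a i) ^ #s := by
  rw [← prod_const]
  exact prod_le_prod (fun i hi => by linarith [ha i hi])
    fun i hi => by linarith [single_le_sum ha hi]

theorem summable_one_add_sum_abs_int_rpow_neg {ι : Type*} [Fintype ι] {s : ℝ}
    (hs : (Fintype.card ι : ℝ) < s) :
    Summable fun z : ι → ℤ => (1 + ∑ i, |(z i : ℝ)|) ^ (-s) := by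
  rcases isEmpty_or_nonempty ι with hι | hι
  · exact .of_finite
  set n : ℝ := (Fintype.card ι : ℝ)
  have hn : 0 < n := by simp [n, Fintype.card_pos]
  set p := s / n
  have hp : 1 < p := (one_lt_div hn).mpr hs
  refine (summable_pi_prod_of_nonneg (fun _ _ => by positivity)
    fun _ => summable_one_add_abs_int_rpow_neg hp).of_nonneg_of_le
    (fun _ => by positivity) fun z => ?_
  have hprod : ∏ i, (1 + |(z i : ℝ)|) ≤ (1 + ∑ i, |(z i : ℝ)|) ^ n := by
    simpa [n, ← rpow_natCast] using
      prod_one_add_le_one_add_sum_pow univ fun i _ => abs_nonneg (z i : ℝ)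
  calc (1 + ∑ i, |(z i : ℝ)|) ^ (-s) = ((1 + ∑ i, |(z i : ℝ)|) ^ n) ^ (-p) := by
        rw [← rpow_mul (by positivity), mul_neg, mul_div_cancel₀ _ hn.ne']
    _ ≤ (∏ i, (1 + |(z i : ℝ)|)) ^ (-p) :=
        rpow_le_rpow_of_nonpos (by positivity) hprod (by linarith)
    _ = ∏ i, (1 + |(z i : ℝ)|) ^ (-p) :=
        (finsetProd_rpow _ _ (fun _ _ => by positivity) _).symm

theorem one_add_rpow_neg_le_of_le_two_mul {s c t : ℝ} (hs : 0 ≤ s) (hc : 0 ≤ c)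
    (hct : c ≤ 2 * t) : (1 + t) ^ (-s) ≤ 2 ^ s * (1 + c) ^ (-s) :=
  calc (1 + t) ^ (-s) ≤ ((1 + c) / 2) ^ (-s) :=
        rpow_le_rpow_of_nonpos (by positivity) (by linarith) (by linarith)
    _ = 2 ^ s * (1 + c) ^ (-s) := by
        rw [div_rpow (by positivity) zero_le_two, rpow_neg zero_le_two]
        field_simp

theorem one_add_rpow_neg_mul_le {s a b c : ℝ} (hs : 0 ≤ s) (ha : 0 ≤ a) (hb : 0 ≤ b)
    (hc : 0 ≤ c) (habc : c ≤ a + b) :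
    (1 + a) ^ (-s) * (1 + b) ^ (-s) ≤
      2 ^ s * (1 + c) ^ (-s) * ((1 + a) ^ (-s) + (1 + b) ^ (-s)) := by
  have hFa : 0 ≤ (1 + a) ^ (-s) := by positivity
  have hFb : 0 ≤ (1 + b) ^ (-s) := by positivity
  rcases le_total c (2 * a) with hca | hac
  · calc (1 + a) ^ (-s) * (1 + b) ^ (-s) ≤ 2 ^ s * (1 + c) ^ (-s) * (1 + b) ^ (-s) :=
          mul_le_mul_of_nonneg_right (one_add_rpow_neg_le_of_le_two_mul hs hc hca) hFb
      _ ≤ _ := by gcongr; linarith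
  · have hcb : c ≤ 2 * b := by linarith
    calc (1 + a) ^ (-s) * (1 + b) ^ (-s) ≤ (1 + a) ^ (-s) * (2 ^ s * (1 + c) ^ (-s)) :=
          mul_le_mul_of_nonneg_left (one_add_rpow_neg_le_of_le_two_mul hs hc hcb) hFa
      _ ≤ _ := by rw [mul_comm]; gcongr; linarith

namespace AddGroupSeminorm

variable {G : Type*} [AddGroup G] (N : AddGroupSeminorm G)

theorem tsum_one_add_rpow_neg_mul_le {s : ℝ} (hs : 0 ≤ s)
    (hsum : Summable fun z => (1 + N z) ^ (-s)) (x y : G) :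
    ∑' z, (1 + N (x - z)) ^ (-s) * (1 + N (z - y)) ^ (-s) ≤
      2 ^ s * (2 * ∑' z, (1 + N z) ^ (-s)) * (1 + N (x - y)) ^ (-s) := by
  have hF₀ : ∀ z, 0 ≤ (1 + N z) ^ (-s) := fun z => rpow_nonneg (by linarith [apply_nonneg N z]) _
  have hsumx : Summable fun z => (1 + N (x - z)) ^ (-s) := (Equiv.subLeft x).summable_iff.mpr hsum
  have hsumy : Summable fun z => (1 + N (z - y)) ^ (-s) := (Equiv.subRight y).summable_iff.mpr hsum
  have htsumx : ∑' z, (1 + N (x - z)) ^ (-s) = ∑' z, (1 + N z) ^ (-s) :=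
    (Equiv.subLeft x).tsum_eq fun z => (1 + N z) ^ (-s)
  have htsumy : ∑' z, (1 + N (z - y)) ^ (-s) = ∑' z, (1 + N z) ^ (-s) :=
    (Equiv.subRight y).tsum_eq fun z => (1 + N z) ^ (-s)
  have hpoint (z : G) := one_add_rpow_neg_mul_le hs (apply_nonneg N (x - z))
    (apply_nonneg N (z - y)) (apply_nonneg N (x - y)) (le_map_sub_add_map_sub N x z y)
  have hbound := (hsumx.add hsumy).mul_left (2 ^ s * (1 + N (x - y)) ^ (-s))
  calc ∑' z, (1 + N (x - z)) ^ (-s) * (1 + N (z - y)) ^ (-s)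
      ≤ ∑' z, 2 ^ s * (1 + N (x - y)) ^ (-s) *
          ((1 + N (x - z)) ^ (-s) + (1 + N (z - y)) ^ (-s)) :=
        (hbound.of_nonneg_of_le (fun z => mul_nonneg (hF₀ _) (hF₀ _)) hpoint).tsum_le_tsum
          hpoint hbound
    _ = _ := by
        rw [tsum_mul_left, hsumx.tsum_add hsumy, htsumx, htsumy]
        ring

end AddGroupSeminorm

def l1Seminorm (ι : Type*) [Fintype ι] : AddGroupSeminorm (ι → ℤ) where
  toFun z := ∑ i, |(z i : ℝ)|
  map_zero' := by simp
  add_le' x y := by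
    simpa only [← sum_add_distrib, Pi.add_apply, Int.cast_add] using
      sum_le_sum fun i _ => abs_add_le (x i : ℝ) (y i)
  neg' x := by simp

theorem l1Seminorm_apply {ι : Type*} [Fintype ι] (z : ι → ℤ) :
    l1Seminorm ι z = ∑ i, |(z i : ℝ)| := rfl

theorem l1Seminorm_sub {ι : Type*} [Fintype ι] (x z : ι → ℤ) :
    l1Seminorm ι (x - z) = ∑ i, |(x i : ℝ) - (z i : ℝ)| := by
  simp [l1Seminorm_apply]

theorem stmt4_general (ν : ℕ) (ε : ℝ) (hε : 0 < ε) :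
    ∃ C : ℝ, 0 < C ∧ ∀ x y : Fin ν → ℤ,
      (∑' z : Fin ν → ℤ,
          (1 + ∑ i, |(x i : ℝ) - (z i : ℝ)|) ^ (-((ν : ℝ) + ε)) *
            (1 + ∑ i, |(z i : ℝ) - (y i : ℝ)|) ^ (-((ν : ℝ) + ε)))
        ≤ C * (1 + ∑ i, |(x i : ℝ) - (y i : ℝ)|) ^ (-((ν : ℝ) + ε)) := by
  set s : ℝ := ν + ε
  have hs : 0 ≤ s := by positivity
  have hsum : Summable fun z => (1 + l1Seminorm (Fin ν) z) ^ (-s) :=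
    summable_one_add_sum_abs_int_rpow_neg (by simp [s, hε])
  have hS : 0 < ∑' z, (1 + l1Seminorm (Fin ν) z) ^ (-s) :=
    hsum.tsum_pos (fun z => by positivity) 0 (by simp)
  refine ⟨2 ^ s * (2 * ∑' z, (1 + l1Seminorm (Fin ν) z) ^ (-s)), by positivity, fun x y => ?_⟩
  simpa only [l1Seminorm_sub] using
    (l1Seminorm (Fin ν)).tsum_one_add_rpow_neg_mul_le hs hsum x y

/-- For `ν ≥ 1` and `ε > 0`, the function `F(r) = (1+r)^(-(ν+ε))` on `ℤ^ν`
with the `ℓ¹` metric satisfies the convolution condition of an `F`-function: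
`Σ_z F(d(x,z)) F(d(z,y)) ≤ C · F(d(x,y))` for some constant `C > 0`. -/
theorem stmt4 (ν : ℕ) (hν : 1 ≤ ν) (ε : ℝ) (hε : 0 < ε) :
    ∃ C : ℝ, 0 < C ∧ ∀ x y : Fin ν → ℤ,
      (∑' z : Fin ν → ℤ,
          (1 + ∑ i, |(x i : ℝ) - (z i : ℝ)|) ^ (-((ν : ℝ) + ε)) *
            (1 + ∑ i, |(z i : ℝ) - (y i : ℝ)|) ^ (-((ν : ℝ) + ε)))
        ≤ C * (1 + ∑ i, |(x i : ℝ) - (y i : ℝ)|) ^ (-((ν : ℝ) + ε)) :=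
  stmt4_general ν ε hε
end

section
/- Let (Γ, d) be a metric space (with Γ countable), let F₀ : [0,∞) → (0,∞), let a > 0, and let g : [0,∞) → [0,∞) be non-decreasing and subadditive (g(s+t) ≤ g(s) + g(t) for all s, t ≥ 0). Define F(r) = e^{−a·g(r)} · F₀(r). Then: (i) if sup_{y ∈ Γ} Σ_{x ∈ Γ} F₀(d(x,y)) ≤ K, then sup_{y ∈ Γ} Σ_{x ∈ Γ} F(d(x,y)) ≤ K; and (ii) if Σ_{z ∈ Γ} F₀(d(x,z))·F₀(d(z,y)) ≤ C·F₀(d(x,y)) for all x, y ∈ Γ, then Σ_{z ∈ Γ} F(d(x,z))·F(d(z,y)) ≤ C·F(d(x,y)) for all x, y ∈ Γ. -/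
/-- Multiplying a candidate `F`-function `F₀` by the subadditive exponential
weight `e^(-a·g(r))` (with `g : [0,∞) → [0,∞)` non-decreasing and subadditive, `a > 0`)
preserves both the uniform summability condition (with the same constant `K`) and the
convolution condition (with the same constant `C`). -/
theorem stmt5 {Γ : Type*} [MetricSpace Γ] [Countable Γ]
    (F₀ : ℝ → ℝ) (hF₀pos : ∀ r, 0 ≤ r → 0 < F₀ r)
    (a : ℝ) (ha : 0 < a)
    (g : ℝ → ℝ) (hg_nonneg : ∀ r, 0 ≤ r → 0 ≤ g r)
    (hg_mono : ∀ s t, 0 ≤ s → s ≤ t → g s ≤ g t)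
    (hg_subadd : ∀ s t, 0 ≤ s → 0 ≤ t → g (s + t) ≤ g s + g t)
    (F : ℝ → ℝ) (hF : ∀ r, F r = Real.exp (-a * g r) * F₀ r) :
    (∀ K : ℝ, (∀ y : Γ, Summable fun x : Γ => F₀ (dist x y)) →
        (∀ y : Γ, ∑' x : Γ, F₀ (dist x y) ≤ K) →
        ∀ y : Γ, ∑' x : Γ, F (dist x y) ≤ K) ∧
    (∀ C : ℝ, (∀ x y : Γ, Summable fun z : Γ => F₀ (dist x z) * F₀ (dist z y)) →
        (∀ x y : Γ, ∑' z : Γ, F₀ (dist x z) * F₀ (dist z y) ≤ C * F₀ (dist x y)) →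
        ∀ x y : Γ, ∑' z : Γ, F (dist x z) * F (dist z y) ≤ C * F (dist x y)) := by
  have hFnonneg : ∀ r, 0 ≤ r → 0 ≤ F r := fun r hr => by
    rw [hF]; exact mul_nonneg (Real.exp_pos _).le (hF₀pos r hr).le
  have hFle : ∀ r, 0 ≤ r → F r ≤ F₀ r := fun r hr => by
    rw [hF]
    have : Real.exp (-a * g r) ≤ 1 := by
      rw [Real.exp_le_one_iff]
      exact mul_nonpos_of_nonpos_of_nonneg (neg_nonpos.mpr ha.le) (hg_nonneg r hr)
    calc Real.exp (-a * g r) * F₀ r ≤ 1 * F₀ r :=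
          mul_le_mul_of_nonneg_right this (hF₀pos r hr).le
      _ = F₀ r := one_mul _
  constructor
  · intro K hsum hK y
    have hs : Summable fun x : Γ => F (dist x y) :=
      Summable.of_nonneg_of_le (fun x => hFnonneg _ dist_nonneg)
        (fun x => hFle _ dist_nonneg) (hsum y)
    calc ∑' x : Γ, F (dist x y) ≤ ∑' x : Γ, F₀ (dist x y) :=
          Summable.tsum_le_tsum (fun x => hFle _ dist_nonneg) hs (hsum y)
      _ ≤ K := hK y
  · intro C hsum hC x y
    -- pointwise bound
    have key : ∀ z : Γ, F (dist x z) * F (dist z y) ≤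
        Real.exp (-a * g (dist x y)) * (F₀ (dist x z) * F₀ (dist z y)) := by
      intro z
      rw [hF, hF]
      have hd1 := dist_nonneg (x := x) (y := z)
      have hd2 := dist_nonneg (x := z) (y := y)
      have hge : g (dist x y) ≤ g (dist x z) + g (dist z y) :=
        le_trans (hg_mono _ _ dist_nonneg (dist_triangle x z y))
          (hg_subadd _ _ hd1 hd2)
      have hexp : Real.exp (-a * g (dist x z)) * Real.exp (-a * g (dist z y)) ≤
          Real.exp (-a * g (dist x y)) := by
        rw [← Real.exp_add, Real.exp_le_exp]
        nlinarith [hg_nonneg _ (dist_nonneg (x := x) (y := y))]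
      calc Real.exp (-a * g (dist x z)) * F₀ (dist x z) *
            (Real.exp (-a * g (dist z y)) * F₀ (dist z y))
          = (Real.exp (-a * g (dist x z)) * Real.exp (-a * g (dist z y))) *
            (F₀ (dist x z) * F₀ (dist z y)) := by ring
        _ ≤ Real.exp (-a * g (dist x y)) * (F₀ (dist x z) * F₀ (dist z y)) :=
            mul_le_mul_of_nonneg_right hexp
              (mul_nonneg (hF₀pos _ hd1).le (hF₀pos _ hd2).le)
    have hnn : ∀ z : Γ, 0 ≤ F (dist x z) * F (dist z y) := fun z =>
      mul_nonneg (hFnonneg _ dist_nonneg) (hFnonneg _ dist_nonneg)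
    have hs2 : Summable fun z : Γ =>
        Real.exp (-a * g (dist x y)) * (F₀ (dist x z) * F₀ (dist z y)) :=
      (hsum x y).mul_left _
    have hs : Summable fun z : Γ => F (dist x z) * F (dist z y) :=
      Summable.of_nonneg_of_le hnn key hs2
    calc ∑' z : Γ, F (dist x z) * F (dist z y)
        ≤ ∑' z : Γ, Real.exp (-a * g (dist x y)) * (F₀ (dist x z) * F₀ (dist z y)) :=
          Summable.tsum_le_tsum key hs hs2
      _ = Real.exp (-a * g (dist x y)) * ∑' z : Γ, F₀ (dist x z) * F₀ (dist z y) :=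
          tsum_mul_left
      _ ≤ Real.exp (-a * g (dist x y)) * (C * F₀ (dist x y)) :=
          mul_le_mul_of_nonneg_left (hC x y) (Real.exp_pos _).le
      _ = C * F (dist x y) := by rw [hF]; ring
end

section
/- Let A be a normed ℂ-algebra (with submultiplicative norm), let (S_n)_{n ∈ ℕ} be a sequence of subalgebras of A (each S_n is a linear subspace closed under multiplication, containing 0), and let f : ℕ → ℝ with f(n) > 0 for all n. For a ∈ A define N(a) = ‖a‖ + sup_n f(n)⁻¹ · infDist(a, S_n), with values in [0, ∞]. Then for all a, b ∈ A with N(a) < ∞ and N(b) < ∞, one has N(a·b) ≤ 2 · N(a) · N(b). -/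
/-!
Write `d(x) = infDist x S`. For `s, t ∈ S` the product `s * t` lies in `S`, so `d(a t) ≤ ‖t‖ d(a)`,
and passing through `a t` gives `d(a b) ≤ ‖t‖ d(a) + ‖a‖ ‖b - t‖`; optimizing over `t` yields
`d(a b) ≤ d(a) ‖b‖ + (‖a‖ + d(a)) d(b) ≤ 2 d(a) ‖b‖ + ‖a‖ d(b)`, using `d(b) ≤ ‖b‖` as `0 ∈ S`.
Weighting by `f(n)⁻¹` and taking suprema, `N(a b) ≤ ‖a‖ ‖b‖ + 2 D(a) ‖b‖ + ‖a‖ D(b)`, which is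
at most `2 N(a) N(b)` for `N = ‖·‖ + D`.
-/

open scoped ENNReal

/-- The quasi-locality norm `‖a‖_f = ‖a‖ + sup_n f(n)⁻¹ · infDist(a, S_n)`, with values in
`[0,∞]`, associated with a decay function `f` and a filtration of "local" sets `S n`. -/
noncomputable def quasiLocalNorm {A : Type*} [NormedRing A] [NormedAlgebra ℂ A]
    (S : ℕ → NonUnitalSubalgebra ℂ A) (f : ℕ → ℝ) (a : A) : ℝ≥0∞ :=
  (‖a‖₊ : ℝ≥0∞) + ⨆ n, ENNReal.ofReal ((f n)⁻¹ * Metric.infDist a (S n : Set A))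

open Metric

lemma Metric.le_mul_infDist {X : Type*} [PseudoMetricSpace X] {x : X} {s : Set X} {u c : ℝ}
    (hc : 0 ≤ c) (hs : s.Nonempty) (h : ∀ y ∈ s, u ≤ c * dist x y) : u ≤ c * infDist x s := by
  rw [infDist_eq_iInf, Real.mul_iInf_of_nonneg hc]
  have := hs.to_subtype
  exact le_ciInf fun y => h y y.2

section

variable {A σ : Type*} [NonUnitalSeminormedRing A] [SetLike σ A] [ZeroMemClass σ A] (S : σ)

lemma infDist_le_norm (b : A) : infDist b (S : Set A) ≤ ‖b‖ := by
  simpa using infDist_le_dist_of_mem (x := b) (zero_mem S)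

variable [MulMemClass σ A]

lemma infDist_mul_mem_le (a : A) {t : A} (ht : t ∈ S) :
    infDist (a * t) (S : Set A) ≤ ‖t‖ * infDist a (S : Set A) :=
  le_mul_infDist (norm_nonneg t) ⟨0, zero_mem S⟩ fun s hs =>
    calc infDist (a * t) (S : Set A) ≤ ‖a * t - s * t‖ := by
          simpa [dist_eq_norm] using infDist_le_dist_of_mem (x := a * t) (mul_mem hs ht)
      _ ≤ ‖t‖ * dist a s := by
          rw [← sub_mul, dist_eq_norm, mul_comm ‖t‖]
          exact norm_mul_le _ _

lemma infDist_mul_le (a b : A) :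
    infDist (a * b) (S : Set A) ≤
      infDist a (S : Set A) * ‖b‖ + (‖a‖ + infDist a (S : Set A)) * infDist b (S : Set A) := by
  have hda : 0 ≤ infDist a (S : Set A) := infDist_nonneg
  suffices infDist (a * b) (S : Set A) - infDist a (S : Set A) * ‖b‖ ≤
      (‖a‖ + infDist a (S : Set A)) * infDist b (S : Set A) by linarith
  refine le_mul_infDist (by positivity) ⟨0, zero_mem S⟩ fun t ht => ?_
  have h_through_at := infDist_le_infDist_add_dist (x := a * b) (y := a * t) (s := (S : Set A))
  have h_at := infDist_mul_mem_le S a ht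
  have h_dist : dist (a * b) (a * t) ≤ ‖a‖ * dist b t := by
    rw [dist_eq_norm, dist_eq_norm, ← mul_sub]
    exact norm_mul_le _ _
  have h_norm : ‖t‖ ≤ ‖b‖ + dist b t := by
    rw [dist_comm]
    exact norm_le_norm_add_const_of_dist_le le_rfl
  nlinarith

lemma infDist_mul_le_two_mul (a b : A) :
    infDist (a * b) (S : Set A) ≤
      2 * infDist a (S : Set A) * ‖b‖ + ‖a‖ * infDist b (S : Set A) := by
  have := infDist_mul_le S a b
  have := infDist_le_norm S b
  have : 0 ≤ infDist a (S : Set A) := infDist_nonneg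
  nlinarith

/-- The weight `c` may be nonpositive: then `ENNReal.ofReal` truncates the left side to `0`. -/
lemma ofReal_mul_infDist_mul_le (c : ℝ) (a b : A) :
    ENNReal.ofReal (c * infDist (a * b) (S : Set A)) ≤
      2 * ENNReal.ofReal (c * infDist a (S : Set A)) * ‖b‖ₑ +
        ‖a‖ₑ * ENNReal.ofReal (c * infDist b (S : Set A)) := by
  rcases le_or_gt c 0 with hc | hc
  · simp [ENNReal.ofReal_of_nonpos (mul_nonpos_of_nonpos_of_nonneg hc infDist_nonneg)]
  have hda : 0 ≤ infDist a (S : Set A) := infDist_nonneg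
  have hdb : 0 ≤ infDist b (S : Set A) := infDist_nonneg
  rw [← ofReal_norm, ← ofReal_norm, ← ENNReal.ofReal_ofNat 2, ← ENNReal.ofReal_mul (by norm_num),
    ← ENNReal.ofReal_mul (by positivity), ← ENNReal.ofReal_mul (norm_nonneg _),
    ← ENNReal.ofReal_add (by positivity) (by positivity)]
  refine ENNReal.ofReal_le_ofReal ?_
  have := mul_le_mul_of_nonneg_left (infDist_mul_le_two_mul S a b) hc.le
  linarith

end

theorem stmt9_general {A : Type*} [NormedRing A] [NormedAlgebra ℂ A]
    (S : ℕ → NonUnitalSubalgebra ℂ A) (f : ℕ → ℝ)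
    (a b : A) :
    quasiLocalNorm S f (a * b) ≤ 2 * quasiLocalNorm S f a * quasiLocalNorm S f b := by
  set Da := ⨆ n, ENNReal.ofReal ((f n)⁻¹ * infDist a (S n : Set A))
  set Db := ⨆ n, ENNReal.ofReal ((f n)⁻¹ * infDist b (S n : Set A))
  have h_sup : ⨆ n, ENNReal.ofReal ((f n)⁻¹ * infDist (a * b) (S n : Set A)) ≤
      2 * Da * ‖b‖ₑ + ‖a‖ₑ * Db := iSup_le fun n =>
    (ofReal_mul_infDist_mul_le (S n) _ a b).trans <| by
      gcongr
      · exact le_iSup (fun n => ENNReal.ofReal ((f n)⁻¹ * infDist a (S n : Set A))) n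
      · exact le_iSup (fun n => ENNReal.ofReal ((f n)⁻¹ * infDist b (S n : Set A))) n
  calc quasiLocalNorm S f (a * b) ≤ ‖a‖ₑ * ‖b‖ₑ + (2 * Da * ‖b‖ₑ + ‖a‖ₑ * Db) :=
        add_le_add (ENNReal.coe_le_coe.2 (nnnorm_mul_le a b)) h_sup
    _ ≤ ‖a‖ₑ * ‖b‖ₑ + (2 * Da * ‖b‖ₑ + ‖a‖ₑ * Db) + (‖a‖ₑ * ‖b‖ₑ + ‖a‖ₑ * Db + 2 * Da * Db) :=
        le_self_add
    _ = 2 * quasiLocalNorm S f a * quasiLocalNorm S f b := by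
        rw [quasiLocalNorm, quasiLocalNorm, ← enorm_eq_nnnorm, ← enorm_eq_nnnorm]
        ring

/-- The quasi-locality norm is submultiplicative up to a factor `2`:
for `a, b` with finite quasi-locality norm, `N(a·b) ≤ 2 · N(a) · N(b)`. -/
theorem stmt9 {A : Type*} [NormedRing A] [NormedAlgebra ℂ A]
    (S : ℕ → NonUnitalSubalgebra ℂ A) (f : ℕ → ℝ) (hf : ∀ n, 0 < f n)
    (a b : A) (ha : quasiLocalNorm S f a < ⊤) (hb : quasiLocalNorm S f b < ⊤) :
    quasiLocalNorm S f (a * b) ≤ 2 * quasiLocalNorm S f a * quasiLocalNorm S f b :=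
  stmt9_general S f a b
end

section
/- Let m, n ≥ 1 and consider the complex matrix algebra M of square matrices indexed by (Fin m × Fin n), equipped with the ℓ²-operator norm. Define the linear map Π : M → M by Π(A)_{(i,j),(k,l)} = δ_{j,l} · (1/n) · Σ_{t ∈ Fin n} A_{(i,t),(k,t)}. Then for every A ∈ M, ‖A − Π(A)‖ ≤ sup { ‖A·(I ⊗ B) − (I ⊗ B)·A‖ : B an n×n complex matrix with ‖B‖ ≤ 1 }, where I ⊗ B denotes the matrix with entries (I ⊗ B)_{(i,j),(k,l)} = δ_{i,k} · B_{j,l}. -/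
open scoped Matrix.Norms.L2Operator

/-- The conditional expectation `id ⊗ ρ` (partial trace over the second tensor factor,
tensored with the identity on it): `Π(A)_{(i,j),(k,l)} = δ_{j,l} · (1/n) · Σ_t A_{(i,t),(k,t)}`. -/
noncomputable def condExpSecondFactor (m n : ℕ)
    (A : Matrix (Fin m × Fin n) (Fin m × Fin n) ℂ) :
    Matrix (Fin m × Fin n) (Fin m × Fin n) ℂ :=
  Matrix.of fun p q =>
    if p.2 = q.2 then ((n : ℂ))⁻¹ * ∑ t : Fin n, A (p.1, t) (q.1, t) else 0

/-- The amplification `I ⊗ B` of an `n×n` matrix `B` to the factorized index set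
`Fin m × Fin n`: `(I ⊗ B)_{(i,j),(k,l)} = δ_{i,k} · B_{j,l}`. -/
def amplSecondFactor (m n : ℕ) (B : Matrix (Fin n) (Fin n) ℂ) :
    Matrix (Fin m × Fin n) (Fin m × Fin n) ℂ :=
  Matrix.of fun p q => if p.1 = q.1 then B p.2 q.2 else 0

namespace Stmt14Aux
open Complex Matrix
open scoped Kronecker Real

lemma ampl_eq_kronecker (m n : ℕ) (B : Matrix (Fin n) (Fin n) ℂ) :
    amplSecondFactor m n B = (1 : Matrix (Fin m) (Fin m) ℂ) ⊗ₖ B := by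
  ext ⟨i, j⟩ ⟨k, l⟩
  simp [amplSecondFactor, Matrix.one_apply, ite_mul, Matrix.kroneckerMap_apply]

lemma ampl_mul (m n : ℕ) (B C : Matrix (Fin n) (Fin n) ℂ) :
    amplSecondFactor m n B * amplSecondFactor m n C = amplSecondFactor m n (B * C) := by
  simp [ampl_eq_kronecker, ← Matrix.mul_kronecker_mul]

lemma ampl_one (m n : ℕ) : amplSecondFactor m n 1 = 1 := by
  simp [ampl_eq_kronecker, Matrix.one_kronecker_one]

lemma ampl_conjTranspose (m n : ℕ) (B : Matrix (Fin n) (Fin n) ℂ) :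
    (amplSecondFactor m n B)ᴴ = amplSecondFactor m n Bᴴ := by
  ext ⟨i, j⟩ ⟨k, l⟩
  simp [amplSecondFactor, Matrix.conjTranspose_apply, eq_comm, apply_ite (starRingEnd ℂ)]

noncomputable def ζ (n : ℕ) : ℂ := Complex.exp (2 * Real.pi * Complex.I / n)

lemma zeta_ne_zero (n : ℕ) : ζ n ≠ 0 := Complex.exp_ne_zero _

lemma zeta_prim (n : ℕ) (hn : n ≠ 0) : IsPrimitiveRoot (ζ n) n :=
  Complex.isPrimitiveRoot_exp n hn

lemma conj_zeta (n : ℕ) : (starRingEnd ℂ) (ζ n) = (ζ n)⁻¹ := by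
  have h : (2 * (Real.pi : ℂ) * Complex.I / n) = ((2 * Real.pi / n : ℝ) : ℂ) * Complex.I := by
    push_cast; ring
  rw [Complex.inv_eq_conj]
  rw [ζ, h, Complex.norm_exp_ofReal_mul_I]

lemma conj_zeta_pow (n : ℕ) (a : ℕ) : (starRingEnd ℂ) (ζ n ^ a) = (ζ n)⁻¹ ^ a := by
  rw [map_pow, conj_zeta]

lemma conj_zeta_pow_mul (n : ℕ) (a : ℕ) : (starRingEnd ℂ) (ζ n ^ a) * ζ n ^ a = 1 := by
  rw [conj_zeta_pow, ← mul_pow, inv_mul_cancel₀ (zeta_ne_zero n), one_pow]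

lemma phase_sum (n : ℕ) (hn : n ≠ 0) (j l : Fin n) :
    ∑ χ : Fin n, ζ n ^ ((χ : ℕ) * (j : ℕ)) * (starRingEnd ℂ) (ζ n ^ ((χ : ℕ) * (l : ℕ))) =
      if j = l then (n : ℂ) else 0 := by
  have hterm : ∀ χ : Fin n,
      ζ n ^ ((χ : ℕ) * (j : ℕ)) * (starRingEnd ℂ) (ζ n ^ ((χ : ℕ) * (l : ℕ)))
        = (ζ n ^ (j : ℕ) * ((ζ n) ^ (l : ℕ))⁻¹) ^ (χ : ℕ) := by
    intro χ
    rw [conj_zeta_pow, mul_pow, ← inv_pow, ← pow_mul, ← pow_mul,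
      mul_comm (j : ℕ) (χ : ℕ), mul_comm (l : ℕ) (χ : ℕ)]
  simp_rw [hterm]
  rw [Fin.sum_univ_eq_sum_range (fun i => (ζ n ^ (j : ℕ) * ((ζ n) ^ (l : ℕ))⁻¹) ^ i) n]
  by_cases hjl : j = l
  · subst hjl
    rw [mul_inv_cancel₀ (pow_ne_zero _ (zeta_ne_zero n))]
    simp
  · have hne : ζ n ^ (j : ℕ) * ((ζ n) ^ (l : ℕ))⁻¹ ≠ 1 := by
      intro h
      have h2 : ζ n ^ (j : ℕ) = ζ n ^ (l : ℕ) := by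
        field_simp at h
        rw [div_eq_one_iff_eq (pow_ne_zero _ (zeta_ne_zero n))] at h
        exact h
      exact hjl (Fin.ext ((zeta_prim n hn).pow_inj j.2 l.2 h2))
    rw [geom_sum_eq hne]
    have hzn : (ζ n ^ (j : ℕ) * ((ζ n) ^ (l : ℕ))⁻¹) ^ n = 1 := by
      rw [mul_pow, ← inv_pow, ← pow_mul, ← pow_mul, mul_comm (j : ℕ) n, mul_comm (l : ℕ) n,
        pow_mul, pow_mul, (zeta_prim n hn).pow_eq_one]
      simp [inv_pow, (zeta_prim n hn).pow_eq_one]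
    rw [hzn]
    simp [hjl]

noncomputable def uMat (n : ℕ) [NeZero n] (g χ : Fin n) : Matrix (Fin n) (Fin n) ℂ :=
  Matrix.of fun j l => if j = l + g then ζ n ^ ((χ : ℕ) * (j : ℕ)) else 0

lemma uMat_conjTranspose_mul (n : ℕ) [NeZero n] (g χ : Fin n) :
    (uMat n g χ)ᴴ * uMat n g χ = 1 := by
  ext a b
  rw [Matrix.mul_apply]
  simp only [uMat, Matrix.conjTranspose_apply, Matrix.of_apply, apply_ite (starRingEnd ℂ),
    map_zero, ite_mul, zero_mul, mul_ite, mul_zero]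
  rw [Finset.sum_eq_single (a + g)]
  · by_cases hab : a = b
    · subst hab
      simp [Matrix.one_apply, ← map_pow, conj_zeta_pow_mul]
    · have h2 : a + g ≠ b + g := by simpa using hab
      simp [h2, Matrix.one_apply, hab]
  · intro t _ ht
    simp [ht]
  · intro h
    exact absurd (Finset.mem_univ _) h

lemma uMat_mul_conjTranspose (n : ℕ) [NeZero n] (g χ : Fin n) :
    uMat n g χ * (uMat n g χ)ᴴ = 1 :=
  mul_eq_one_comm.mp (uMat_conjTranspose_mul n g χ)

lemma uMat_mem_unitary (n : ℕ) [NeZero n] (g χ : Fin n) :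
    uMat n g χ ∈ unitary (Matrix (Fin n) (Fin n) ℂ) :=
  ⟨uMat_conjTranspose_mul n g χ, uMat_mul_conjTranspose n g χ⟩

/-- `V g χ`: the amplified unitary. -/
noncomputable def vMat (m n : ℕ) [NeZero n] (g χ : Fin n) :
    Matrix (Fin m × Fin n) (Fin m × Fin n) ℂ :=
  amplSecondFactor m n (uMat n g χ)

lemma vMat_mul_conjTranspose (m n : ℕ) [NeZero n] (g χ : Fin n) :
    vMat m n g χ * (vMat m n g χ)ᴴ = 1 := by
  rw [vMat, ampl_conjTranspose, ampl_mul, uMat_mul_conjTranspose, ampl_one]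

lemma vMat_conjTranspose_mul (m n : ℕ) [NeZero n] (g χ : Fin n) :
    (vMat m n g χ)ᴴ * vMat m n g χ = 1 := by
  rw [vMat, ampl_conjTranspose, ampl_mul, uMat_conjTranspose_mul, ampl_one]

lemma vMat_mul_apply (m n : ℕ) [NeZero n] (g χ : Fin n)
    (M : Matrix (Fin m × Fin n) (Fin m × Fin n) ℂ) (i : Fin m) (j : Fin n)
    (q : Fin m × Fin n) :
    (vMat m n g χ * M) (i, j) q = ζ n ^ ((χ : ℕ) * (j : ℕ)) * M (i, j - g) q := by
  rw [Matrix.mul_apply, Fintype.sum_prod_type]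
  rw [Finset.sum_eq_single i]
  · rw [Finset.sum_eq_single (j - g)]
    · simp [vMat, amplSecondFactor, uMat]
    · intro t _ ht
      have : j ≠ t + g := by
        intro h
        exact ht (by rw [h]; exact (add_sub_cancel_right t g).symm ▸ rfl)
      simp [vMat, amplSecondFactor, uMat, this]
    · intro h
      exact absurd (Finset.mem_univ _) h
  · intro i' _ hi'
    simp [vMat, amplSecondFactor, uMat, Ne.symm hi', Finset.sum_ite_of_false]
  · intro h
    exact absurd (Finset.mem_univ _) h

lemma conj_entry (m n : ℕ) [NeZero n] (g χ : Fin n)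
    (A : Matrix (Fin m × Fin n) (Fin m × Fin n) ℂ) (i k : Fin m) (j l : Fin n) :
    (vMat m n g χ * A * (vMat m n g χ)ᴴ) (i, j) (k, l) =
      ζ n ^ ((χ : ℕ) * (j : ℕ)) * (starRingEnd ℂ) (ζ n ^ ((χ : ℕ) * (l : ℕ))) *
        A (i, j - g) (k, l - g) := by
  have hAV : A * (vMat m n g χ)ᴴ = (vMat m n g χ * Aᴴ)ᴴ := by
    rw [Matrix.conjTranspose_mul, Matrix.conjTranspose_conjTranspose]
  rw [mul_assoc, hAV]
  rw [vMat_mul_apply]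
  rw [Matrix.conjTranspose_apply, vMat_mul_apply]
  simp only [star_mul', Matrix.conjTranspose_apply, star_star, Complex.star_def,
    Complex.conj_conj]
  ring

lemma sum_conj (m n : ℕ) [NeZero n]
    (A : Matrix (Fin m × Fin n) (Fin m × Fin n) ℂ) :
    ∑ g : Fin n, ∑ χ : Fin n, vMat m n g χ * A * (vMat m n g χ)ᴴ =
      ((n : ℂ) ^ 2) • condExpSecondFactor m n A := by
  have hn : n ≠ 0 := NeZero.ne n
  ext ⟨i, j⟩ ⟨k, l⟩
  simp only [Matrix.sum_apply, Matrix.smul_apply, smul_eq_mul, condExpSecondFactor,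
    Matrix.of_apply, conj_entry]
  have key : ∀ g : Fin n, (∑ χ : Fin n,
      ζ n ^ ((χ : ℕ) * (j : ℕ)) * (starRingEnd ℂ) (ζ n ^ ((χ : ℕ) * (l : ℕ))) *
        A (i, j - g) (k, l - g))
      = (if j = l then (n : ℂ) else 0) * A (i, j - g) (k, l - g) := by
    intro g
    rw [← Finset.sum_mul, phase_sum n hn]
  simp_rw [key]
  by_cases hjl : j = l
  · subst hjl
    simp only [if_pos rfl, if_true]
    rw [← Finset.mul_sum]
    have hre : ∑ g : Fin n, A (i, j - g) (k, j - g) = ∑ t : Fin n, A (i, t) (k, t) :=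
      Fintype.sum_equiv (Equiv.subLeft j) _ _ (fun g => rfl)
    rw [hre]
    have hnc : (n : ℂ) ≠ 0 := Nat.cast_ne_zero.mpr hn
    field_simp
  · simp [hjl]

end Stmt14Aux

open Matrix Stmt14Aux

/-- For the `ℓ²`-operator norm on matrices indexed by `Fin m × Fin n`,
the error of the conditional expectation onto the first factor is bounded by the supremum of
commutator norms with contractions supported on the second factor:
`‖A - Π(A)‖ ≤ sup { ‖A·(I⊗B) - (I⊗B)·A‖ : ‖B‖ ≤ 1 }`. -/
theorem stmt14 (m n : ℕ) (hm : 1 ≤ m) (hn : 1 ≤ n)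
    (A : Matrix (Fin m × Fin n) (Fin m × Fin n) ℂ) :
    ‖A - condExpSecondFactor m n A‖ ≤
      ⨆ B : {B : Matrix (Fin n) (Fin n) ℂ // ‖B‖ ≤ 1},
        ‖A * amplSecondFactor m n (B : Matrix (Fin n) (Fin n) ℂ) -
          amplSecondFactor m n (B : Matrix (Fin n) (Fin n) ℂ) * A‖ := by
  haveI : NeZero n := ⟨by omega⟩
  haveI hne1 : Nonempty (Fin n) := ⟨⟨0, by omega⟩⟩
  haveI hne2 : Nonempty (Fin m × Fin n) := ⟨(⟨0, by omega⟩, ⟨0, by omega⟩)⟩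
  haveI : Nontrivial (Matrix (Fin n) (Fin n) ℂ) := by
    obtain ⟨x⟩ := hne1
    exact ⟨0, 1, fun h => by simpa [Matrix.one_apply] using congrFun (congrFun h x) x⟩
  haveI : Nontrivial (Matrix (Fin m × Fin n) (Fin m × Fin n) ℂ) := by
    obtain ⟨x⟩ := hne2
    exact ⟨0, 1, fun h => by simpa [Matrix.one_apply] using congrFun (congrFun h x) x⟩
  -- boundedness of the commutator norms over the unit ball
  have hampl : Continuous fun B : Matrix (Fin n) (Fin n) ℂ => amplSecondFactor m n B := by
    let L : Matrix (Fin n) (Fin n) ℂ →ₗ[ℂ] Matrix (Fin m × Fin n) (Fin m × Fin n) ℂ :=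
      { toFun := amplSecondFactor m n
        map_add' := by
          intro B C
          ext ⟨i, j⟩ ⟨k, l⟩
          simp only [amplSecondFactor, Matrix.of_apply, Matrix.add_apply]
          split <;> simp
        map_smul' := by
          intro c B
          ext ⟨i, j⟩ ⟨k, l⟩
          simp only [amplSecondFactor, Matrix.of_apply, Matrix.smul_apply, RingHom.id_apply,
            smul_eq_mul]
          split <;> simp }
    exact L.continuous_of_finiteDimensional
  have hcont : Continuous fun B : Matrix (Fin n) (Fin n) ℂ =>
      ‖A * amplSecondFactor m n B - amplSecondFactor m n B * A‖ :=
    ((continuous_const.mul hampl).sub (hampl.mul continuous_const)).norm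
  have hbdd : BddAbove (Set.range fun B : {B : Matrix (Fin n) (Fin n) ℂ // ‖B‖ ≤ 1} =>
      ‖A * amplSecondFactor m n (B : Matrix (Fin n) (Fin n) ℂ) -
        amplSecondFactor m n (B : Matrix (Fin n) (Fin n) ℂ) * A‖) := by
    have hrange : (Set.range fun B : {B : Matrix (Fin n) (Fin n) ℂ // ‖B‖ ≤ 1} =>
        ‖A * amplSecondFactor m n (B : Matrix (Fin n) (Fin n) ℂ) -
          amplSecondFactor m n (B : Matrix (Fin n) (Fin n) ℂ) * A‖)
        = (fun B : Matrix (Fin n) (Fin n) ℂ =>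
            ‖A * amplSecondFactor m n B - amplSecondFactor m n B * A‖) ''
          Metric.closedBall 0 1 := by
      rw [show (fun B : {B : Matrix (Fin n) (Fin n) ℂ // ‖B‖ ≤ 1} =>
          ‖A * amplSecondFactor m n (B : Matrix (Fin n) (Fin n) ℂ) -
            amplSecondFactor m n (B : Matrix (Fin n) (Fin n) ℂ) * A‖)
          = (fun B : Matrix (Fin n) (Fin n) ℂ =>
              ‖A * amplSecondFactor m n B - amplSecondFactor m n B * A‖) ∘ Subtype.val from rfl,
        Set.range_comp, Subtype.range_coe_subtype]
      have hball : {B : Matrix (Fin n) (Fin n) ℂ | ‖B‖ ≤ 1} = Metric.closedBall 0 1 := by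
        ext B
        simp [Metric.mem_closedBall, dist_zero_right]
      exact congrArg _ hball
    rw [hrange]
    exact ((isCompact_closedBall _ _).image hcont).bddAbove
  -- each commutator with the unitaries is dominated by the supremum
  have hle : ∀ g χ : Fin n, ‖A * vMat m n g χ - vMat m n g χ * A‖ ≤
      ⨆ B : {B : Matrix (Fin n) (Fin n) ℂ // ‖B‖ ≤ 1},
        ‖A * amplSecondFactor m n (B : Matrix (Fin n) (Fin n) ℂ) -
          amplSecondFactor m n (B : Matrix (Fin n) (Fin n) ℂ) * A‖ := by
    intro g χ
    have h1 : ‖uMat n g χ‖ ≤ 1 := by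
      have := CStarRing.norm_of_mem_unitary (E := Matrix (Fin n) (Fin n) ℂ)
        (U := uMat n g χ) ?_
      · exact this.le
      · constructor
        · rw [Matrix.star_eq_conjTranspose]; exact uMat_conjTranspose_mul n g χ
        · rw [Matrix.star_eq_conjTranspose]; exact uMat_mul_conjTranspose n g χ
    exact le_ciSup hbdd ⟨uMat n g χ, h1⟩
  -- norm of the unitaries' adjoints
  have hVH : ∀ g χ : Fin n, ‖(vMat m n g χ)ᴴ‖ = 1 := by
    intro g χ
    rw [Matrix.l2_opNorm_conjTranspose]
    apply CStarRing.norm_of_mem_unitary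
    constructor
    · rw [Matrix.star_eq_conjTranspose]; exact vMat_conjTranspose_mul m n g χ
    · rw [Matrix.star_eq_conjTranspose]; exact vMat_mul_conjTranspose m n g χ
  -- the key algebraic identity
  have hid : ((n : ℂ) ^ 2) • (A - condExpSecondFactor m n A) =
      ∑ g : Fin n, ∑ χ : Fin n,
        (A * vMat m n g χ - vMat m n g χ * A) * (vMat m n g χ)ᴴ := by
    have hterm : ∀ g χ : Fin n, (A * vMat m n g χ - vMat m n g χ * A) * (vMat m n g χ)ᴴ
        = A - vMat m n g χ * A * (vMat m n g χ)ᴴ := by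
      intro g χ
      rw [Matrix.sub_mul, mul_assoc A, vMat_mul_conjTranspose, mul_one]
    simp_rw [hterm, Finset.sum_sub_distrib]
    rw [sum_conj m n A, smul_sub]
    congr 1
    simp only [Finset.sum_const, Finset.card_univ, Fintype.card_fin, smul_smul]
    rw [← Nat.cast_smul_eq_nsmul ℂ (n * n) A]
    congr 1
    push_cast
    ring
  -- put everything together
  have hnR : (0 : ℝ) < (n : ℝ) := by positivity
  have hA2 : A - condExpSecondFactor m n A =
      (((n : ℂ) ^ 2)⁻¹) • ∑ g : Fin n, ∑ χ : Fin n,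
        (A * vMat m n g χ - vMat m n g χ * A) * (vMat m n g χ)ᴴ := by
    rw [← hid, smul_smul, inv_mul_cancel₀, one_smul]
    exact pow_ne_zero 2 (Nat.cast_ne_zero.mpr (by omega))
  set S := ⨆ B : {B : Matrix (Fin n) (Fin n) ℂ // ‖B‖ ≤ 1},
      ‖A * amplSecondFactor m n (B : Matrix (Fin n) (Fin n) ℂ) -
        amplSecondFactor m n (B : Matrix (Fin n) (Fin n) ℂ) * A‖ with hS
  have htermle : ∀ g χ : Fin n,
      ‖(A * vMat m n g χ - vMat m n g χ * A) * (vMat m n g χ)ᴴ‖ ≤ S := by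
    intro g χ
    calc ‖(A * vMat m n g χ - vMat m n g χ * A) * (vMat m n g χ)ᴴ‖
        ≤ ‖A * vMat m n g χ - vMat m n g χ * A‖ * ‖(vMat m n g χ)ᴴ‖ :=
          Matrix.l2_opNorm_mul _ _
      _ = ‖A * vMat m n g χ - vMat m n g χ * A‖ := by rw [hVH, mul_one]
      _ ≤ S := hle g χ
  calc ‖A - condExpSecondFactor m n A‖
      = ‖(((n : ℂ) ^ 2)⁻¹)‖ * ‖∑ g : Fin n, ∑ χ : Fin n,
          (A * vMat m n g χ - vMat m n g χ * A) * (vMat m n g χ)ᴴ‖ := by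
        rw [hA2, norm_smul]
    _ ≤ ((n : ℝ) ^ 2)⁻¹ * ∑ g : Fin n, ∑ χ : Fin n,
          ‖(A * vMat m n g χ - vMat m n g χ * A) * (vMat m n g χ)ᴴ‖ := by
        apply mul_le_mul
        · rw [norm_inv, norm_pow, Complex.norm_natCast]
        · exact (norm_sum_le _ _).trans (Finset.sum_le_sum fun g _ => norm_sum_le _ _)
        · exact norm_nonneg _
        · positivity
    _ ≤ ((n : ℝ) ^ 2)⁻¹ * ∑ g : Fin n, ∑ χ : Fin n, S := by
        apply mul_le_mul_of_nonneg_left _ (by positivity)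
        exact Finset.sum_le_sum fun g _ => Finset.sum_le_sum fun χ _ => htermle g χ
    _ = S := by
        simp only [Finset.sum_const, Finset.card_univ, Fintype.card_fin, smul_eq_mul]
        field_simp
        ring
end
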